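/- arXiv:2207.05814 — 5 statements merged into one kernel-verified Lean document; each statement's English description precedes it below -/
import Mathlib

section
/- For all real q with 0 < q ≤ 0.156, the quantity (1 + (4q²)^(1/3))³ / (q+1)² is strictly less than 7/3. -/
/-!
Substituting `v = (2q)^(1/3)` gives `(4q²)^(1/3) = v²` and `q = v³/2`, turning the claim into
`(1 + v²)³ < 7/3 · (v³/2 + 1)²`. Twelve times the difference of the two sides is
`16 - 36v² + 28v³ - 36v⁴ - 5v⁶`, which is decreasing on `v ≥ 0` and still positive at
`v = 0.679`; and `q ≤ 0.156` forces `v ≤ 0.679` since `0.679³ > 0.312`.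
-/

open Real

theorem one_add_sq_cube_lt_of_le (v : ℝ) (hv0 : 0 ≤ v) (hv : v ≤ 0.679) :
    (1 + v ^ 2) ^ 3 < 7 / 3 * (v ^ 3 / 2 + 1) ^ 2 := by
  nlinarith [mul_nonneg (mul_nonneg hv0 hv0) (sub_nonneg.2 hv), mul_nonneg hv0 (sub_nonneg.2 hv),
    mul_nonneg (pow_nonneg hv0 3) (sub_nonneg.2 hv), mul_nonneg (pow_nonneg hv0 5) (sub_nonneg.2 hv)]

/-- For all real `q` with `0 < q ≤ 0.156`, the bound
`(1 + (4q²)^(1/3))³ / (q+1)² < 7/3` holds. -/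
theorem thin_triangle_ratio_bound (q : ℝ) (hq0 : 0 < q) (hq1 : q ≤ 0.156) :
    (1 + (4 * q ^ 2) ^ ((1 : ℝ) / 3)) ^ 3 / (q + 1) ^ 2 < 7 / 3 := by
  have h2q : 0 ≤ 2 * q := by positivity
  obtain ⟨v, hv0, hv3, hw⟩ :
      ∃ v : ℝ, 0 ≤ v ∧ v ^ 3 = 2 * q ∧ (4 * q ^ 2) ^ ((1 : ℝ) / 3) = v ^ 2 := by
    refine ⟨(2 * q) ^ ((1 : ℝ) / 3), by positivity, ?_, ?_⟩
    · rw [one_div]; exact_mod_cast rpow_inv_natCast_pow h2q three_ne_zero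
    · rw [rpow_pow_comm h2q]; ring_nf
  have hv : v ≤ 0.679 :=
    le_of_pow_le_pow_left₀ three_ne_zero (by norm_num) (by rw [hv3]; linarith)
  have hq : q = v ^ 3 / 2 := by linarith
  rw [hw, div_lt_iff₀ (by positivity), hq]
  exact one_add_sq_cube_lt_of_le v hv0 hv
end

section
/- The 2×2 symmetric matrix D = (4√3/3) · [[a·6561√3/800 − b·(59049+44800π²)/7200, −a·6561/800 − b·6561√3/800], [−a·6561/800 − b·6561√3/800, −a·6561√3/800 + b·(59049−44800π²)/7200]], where a² + b² = 1, has eigenvalues (4√3/3)·(−59049 − 22400bπ²)/3600 and (4√3/3)·(59049 − 22400bπ²)/3600. -/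
open Real

/-! Write `D = c • !![α, β; β, γ]`. The eigenvalues of a real symmetric 2×2 matrix are
`(α + γ)/2 ± √(((α - γ)/2)² + β²)`. Here `(α + γ)/2 = -56 b π²/9`, while
`((α - γ)/2, β) = (6561/800) • (√3 a - b, -a - √3 b)` and `(a, b) ↦ (√3 a - b, -a - √3 b)` is
twice an orthogonal map, so `((α - γ)/2)² + β² = (6561/400)²` on the unit circle `a² + b² = 1`. -/

/-- `μ` is an eigenvalue of the real 2×2 matrix `M`. -/
def HasEigenvalue2 (M : Matrix (Fin 2) (Fin 2) ℝ) (μ : ℝ) : Prop :=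
  ∃ v : Fin 2 → ℝ, v ≠ 0 ∧ M.mulVec v = μ • v

theorem hasEigenvalue2_iff_det_sub_eq_zero (M : Matrix (Fin 2) (Fin 2) ℝ) (μ : ℝ) :
    HasEigenvalue2 M μ ↔ (M - μ • 1).det = 0 := by
  rw [← Matrix.exists_mulVec_eq_zero_iff]
  refine exists_congr fun v => and_congr_right fun _ => ?_
  rw [Matrix.sub_mulVec, Matrix.smul_mulVec, Matrix.one_mulVec, sub_eq_zero]

theorem hasEigenvalue2_of_sq_sub_mean_eq {α β γ μ : ℝ}
    (h : (μ - (α + γ) / 2) ^ 2 = ((α - γ) / 2) ^ 2 + β ^ 2) :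
    HasEigenvalue2 !![α, β; β, γ] μ := by
  rw [hasEigenvalue2_iff_det_sub_eq_zero, Matrix.det_fin_two]
  simp only [Matrix.sub_apply, Matrix.smul_apply, Matrix.of_apply, Matrix.cons_val',
    Matrix.cons_val_zero, Matrix.cons_val_one, Matrix.cons_val_fin_one, Matrix.one_apply_eq,
    Matrix.one_apply_ne zero_ne_one, Matrix.one_apply_ne one_ne_zero, smul_eq_mul, mul_one,
    mul_zero, sub_zero]
  linear_combination h

theorem HasEigenvalue2.smul {M : Matrix (Fin 2) (Fin 2) ℝ} {μ : ℝ} (hM : HasEigenvalue2 M μ)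
    (c : ℝ) : HasEigenvalue2 (c • M) (c * μ) := by
  obtain ⟨v, hv, hMv⟩ := hM
  exact ⟨v, hv, by rw [Matrix.smul_mulVec, hMv, smul_smul]⟩

/-- The first-order perturbation matrix `D` for the degenerate second eigenspace
of the equilateral triangle has eigenvalues `(4√3/3)·(−59049 − 22400bπ²)/3600`
and `(4√3/3)·(59049 − 22400bπ²)/3600`, where `a² + b² = 1`. -/
theorem perturbation_matrix_eigenvalues (a b : ℝ) (hab : a ^ 2 + b ^ 2 = 1) :
    HasEigenvalue2
      ((4 * Real.sqrt 3 / 3) •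
        !![a * (6561 * Real.sqrt 3 / 800) - b * ((59049 + 44800 * π ^ 2) / 7200),
            -a * (6561 / 800) - b * (6561 * Real.sqrt 3 / 800);
          -a * (6561 / 800) - b * (6561 * Real.sqrt 3 / 800),
            -a * (6561 * Real.sqrt 3 / 800) + b * ((59049 - 44800 * π ^ 2) / 7200)])
      ((4 * Real.sqrt 3 / 3) * (-59049 - 22400 * b * π ^ 2) / 3600) ∧
    HasEigenvalue2
      ((4 * Real.sqrt 3 / 3) •
        !![a * (6561 * Real.sqrt 3 / 800) - b * ((59049 + 44800 * π ^ 2) / 7200),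
            -a * (6561 / 800) - b * (6561 * Real.sqrt 3 / 800);
          -a * (6561 / 800) - b * (6561 * Real.sqrt 3 / 800),
            -a * (6561 * Real.sqrt 3 / 800) + b * ((59049 - 44800 * π ^ 2) / 7200)])
      ((4 * Real.sqrt 3 / 3) * (59049 - 22400 * b * π ^ 2) / 3600) := by
  have hs : √3 ^ 2 = 3 := Real.sq_sqrt (by norm_num)
  constructor <;>
  · rw [mul_div_assoc (4 * √3 / 3)]
    refine (hasEigenvalue2_of_sq_sub_mean_eq ?_).smul _
    linear_combination (-(6561 / 800) ^ 2 * (a ^ 2 + b ^ 2)) * hs - 4 * (6561 / 800) ^ 2 * hab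
end

section
/- With λ₁ = 16π²/3, λ₂ = 112π²/9, ν₁ = (4√3/3)·b·(−8π²/3), and ν₂ = (4√3/3)·(−59049 − 22400bπ²)/3600, the expression (ν₂λ₁ − ν₁λ₂)/λ₁² equals −(4√3/3)·19683/(6400π²), independently of b, and this value is at most −0.719632. -/
open Real

/-! The `b`-dependent parts of `ν₁` and `ν₂` are in the ratio `λ₂ : λ₁ = 7 : 3`, so they cancel in
the quotient-rule numerator `ν₂λ₁ − ν₁λ₂`; what remains is the constant part of `ν₂` divided by
`λ₁`. The numerical bound then follows from `√3 > 1.7320508` and `π < 3.141593`. -/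

theorem quotient_rule_numerator_div_eq_of_proportional {lam1 lam2 c1 c2 d b : ℝ} (hlam1 : lam1 ≠ 0)
    (hc : c2 * lam1 = c1 * lam2) :
    ((d + b * c2) * lam1 - b * c1 * lam2) / lam1 ^ 2 = d / lam1 := by
  have hnum : (d + b * c2) * lam1 - b * c1 * lam2 = d * lam1 := by linear_combination b * hc
  rw [hnum, pow_two, mul_div_mul_right _ _ hlam1]

theorem lt_sqrt_three : (1.7320508 : ℝ) < √3 := by
  rw [lt_sqrt (by norm_num)]
  norm_num

theorem le_sqrt_three_mul_div_pi_sq :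
    (0.719632 : ℝ) ≤ (4 * √3 / 3) * 19683 / (6400 * π ^ 2) := by
  have hpi_lt : π < 3.141593 := pi_lt_d6
  rw [le_div_iff₀ (by positivity)]
  nlinarith [lt_sqrt_three, pi_pos]

/-- First-order derivative of the fundamental ratio of the equilateral triangle:
with `λ₁ = 16π²/3`, `λ₂ = 112π²/9`, `ν₁ = (4√3/3)·b·(−8π²/3)` and
`ν₂ = (4√3/3)·(−59049 − 22400bπ²)/3600`, the quantity `(ν₂λ₁ − ν₁λ₂)/λ₁²`
equals `−(4√3/3)·19683/(6400π²)`, independently of `b`, and is at most `−0.719632`. -/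
theorem first_order_perturbation_ratio (b lam1 lam2 nu1 nu2 : ℝ)
    (h1 : lam1 = 16 * π ^ 2 / 3) (h2 : lam2 = 112 * π ^ 2 / 9)
    (hn1 : nu1 = (4 * Real.sqrt 3 / 3) * b * (-(8 * π ^ 2) / 3))
    (hn2 : nu2 = (4 * Real.sqrt 3 / 3) * (-59049 - 22400 * b * π ^ 2) / 3600) :
    (nu2 * lam1 - nu1 * lam2) / lam1 ^ 2 =
      -((4 * Real.sqrt 3 / 3) * 19683 / (6400 * π ^ 2)) ∧
    -((4 * Real.sqrt 3 / 3) * 19683 / (6400 * π ^ 2)) ≤ -0.719632 := by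
  set k := 4 * √3 / 3
  have hlam1 : lam1 ≠ 0 := by rw [h1]; positivity
  have hnu1 : nu1 = b * (k * (-(8 * π ^ 2) / 3)) := by rw [hn1]; ring
  have hnu2 : nu2 = k * (-59049 / 3600) + b * (k * (-(56 * π ^ 2) / 9)) := by rw [hn2]; ring
  refine ⟨?_, neg_le_neg le_sqrt_three_mul_div_pi_sq⟩
  rw [hnu1, hnu2, quotient_rule_numerator_div_eq_of_proportional hlam1 (by rw [h1, h2]; ring), h1]
  field_simp
  ring
end

section
/- For all real s, t with 0 ≤ t ≤ 0.0015 and 0 ≤ s ≤ 0.0015, we have 5/2 − 0.509475·(t+s) + 336.972·(s²+t²) ≤ 5/2, with equality if and only if s = t = 0. -/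
/-! On the box the quadratic terms are dominated by the linear ones: the bound splits as
`5/2 - (p s + p t)` with `p x = x (0.509475 - 336.972 x)`, and `336.972 · 0.0015 = 0.505458 < 0.509475`,
so each `p x` is nonnegative and vanishes only at `x = 0`. -/

lemma mul_sub_mul_sq_eq (a b x : ℝ) : b * x - a * x ^ 2 = x * (b - a * x) := by ring

lemma mul_sub_mul_sq_nonneg {a b x : ℝ} (hx : 0 ≤ x) (h : a * x ≤ b) :
    0 ≤ b * x - a * x ^ 2 := by
  rw [mul_sub_mul_sq_eq]
  exact mul_nonneg hx (sub_nonneg.2 h)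

lemma mul_sub_mul_sq_eq_zero_iff {a b x : ℝ} (h : a * x < b) :
    b * x - a * x ^ 2 = 0 ↔ x = 0 := by
  rw [mul_sub_mul_sq_eq, mul_eq_zero, sub_eq_zero, or_iff_left h.ne']

/-- For `0 ≤ t ≤ 0.0015` and `0 ≤ s ≤ 0.0015`,
`5/2 − 0.509475(t+s) + 336.972(s²+t²) ≤ 5/2`, with equality iff `s = t = 0`. -/
theorem square_local_maximizer_bound (s t : ℝ)
    (ht0 : 0 ≤ t) (ht1 : t ≤ 0.0015) (hs0 : 0 ≤ s) (hs1 : s ≤ 0.0015) :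
    5 / 2 - 0.509475 * (t + s) + 336.972 * (s ^ 2 + t ^ 2) ≤ 5 / 2 ∧
    (5 / 2 - 0.509475 * (t + s) + 336.972 * (s ^ 2 + t ^ 2) = 5 / 2 ↔ s = 0 ∧ t = 0) := by
  have dominated : ∀ x : ℝ, x ≤ 0.0015 → 336.972 * x < 0.509475 := fun x hx => by linarith
  have split : 5 / 2 - 0.509475 * (t + s) + 336.972 * (s ^ 2 + t ^ 2)
      = 5 / 2 - ((0.509475 * s - 336.972 * s ^ 2) + (0.509475 * t - 336.972 * t ^ 2)) := by ring
  have hps := mul_sub_mul_sq_nonneg hs0 (dominated s hs1).le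
  have hpt := mul_sub_mul_sq_nonneg ht0 (dominated t ht1).le
  rw [split, sub_le_self_iff, sub_eq_self, add_eq_zero_iff_of_nonneg hps hpt,
    mul_sub_mul_sq_eq_zero_iff (dominated s hs1), mul_sub_mul_sq_eq_zero_iff (dominated t ht1)]
  exact ⟨add_nonneg hps hpt, Iff.rfl⟩
end

section
/- Let ξ, q > 0 and suppose ξ < 7/3. Then the quadratic P(t) = ((1+ξ)/(23q²))t² + (2(1+ξ)/(23q))t + (ξ − 7/3) has exactly one positive real root t*, and for all t with 0 ≤ t < t*, we have ξ + (1+ξ)·t·√(4q(q+t)+t²)/(23q²) < 7/3. -/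
/-- For `ξ, q > 0` with `ξ < 7/3`, the quadratic
`P(t) = ((1+ξ)/(23q²))t² + (2(1+ξ)/(23q))t + (ξ − 7/3)` has exactly one positive
root `t*`, and for all `0 ≤ t < t*` the continuity estimate
`ξ + (1+ξ)·t·√(4q(q+t)+t²)/(23q²) < 7/3` holds. -/
theorem quadratic_step_radius (ξ q : ℝ) (hξ : 0 < ξ) (hq : 0 < q) (hlt : ξ < 7 / 3) :
    ∃ tstar : ℝ, 0 < tstar ∧
      ((1 + ξ) / (23 * q ^ 2)) * tstar ^ 2 + (2 * (1 + ξ) / (23 * q)) * tstar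
        + (ξ - 7 / 3) = 0 ∧
      (∀ t : ℝ, 0 < t →
        ((1 + ξ) / (23 * q ^ 2)) * t ^ 2 + (2 * (1 + ξ) / (23 * q)) * t
          + (ξ - 7 / 3) = 0 → t = tstar) ∧
      (∀ t : ℝ, 0 ≤ t → t < tstar →
        ξ + (1 + ξ) * t * Real.sqrt (4 * q * (q + t) + t ^ 2) / (23 * q ^ 2) < 7 / 3) := by
  have h1ξ : (0:ℝ) < 1 + ξ := by linarith
  have hq2 : (0:ℝ) < 23 * q ^ 2 := by positivity
  have hqne : q ≠ 0 := ne_of_gt hq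
  have h1ξne : (1:ℝ) + ξ ≠ 0 := ne_of_gt h1ξ
  set D : ℝ := q ^ 2 * ((1 + ξ) + 23 * (7 / 3 - ξ)) / (1 + ξ) with hDdef
  have hDval : (1 + ξ) * D = q ^ 2 * ((1 + ξ) + 23 * (7 / 3 - ξ)) := by
    rw [hDdef, mul_div_assoc']; exact mul_div_cancel_left₀ _ h1ξne
  have hDgt : q ^ 2 < D := by
    have h23 : (0:ℝ) < 23 * (7 / 3 - ξ) := by linarith
    nlinarith [hDval, mul_pos (pow_pos hq 2) h23, h1ξ]
  have hD0 : (0:ℝ) ≤ D := le_trans (by positivity) hDgt.le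
  have hs : Real.sqrt D ^ 2 = D := Real.sq_sqrt hD0
  have hqs : q < Real.sqrt D := by
    rw [← Real.sqrt_sq hq.le]
    exact Real.sqrt_lt_sqrt (by positivity) hDgt
  refine ⟨Real.sqrt D - q, by linarith, ?_, ?_, ?_⟩
  · field_simp
    linear_combination 3 * (1 + ξ) * hs + 3 * hDval
  · intro t ht heq
    have key : (t + q) ^ 2 = D := by
      field_simp at heq
      have key2 : 69 * q * (1 + ξ) * (t + q) ^ 2 = 69 * q * (1 + ξ) * D := by
        linear_combination 23 * q * heq - 69 * q * hDval
      exact mul_left_cancel₀ (by positivity) key2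
    have : Real.sqrt ((t + q) ^ 2) = Real.sqrt D := by rw [key]
    rw [Real.sqrt_sq (by linarith)] at this
    linarith
  · intro t ht0 ht1
    have hsq : 4 * q * (q + t) + t ^ 2 = (2 * q + t) ^ 2 := by ring
    rw [hsq, Real.sqrt_sq (by linarith)]
    have htq : t + q < Real.sqrt D := by linarith
    have h1 : (t + q) ^ 2 < D := by nlinarith [hs]
    have h2 : (1 + ξ) * t * (2 * q + t) < (7 / 3 - ξ) * (23 * q ^ 2) := by
      nlinarith [mul_lt_mul_of_pos_left h1 h1ξ, hDval]
    have h3 : (1 + ξ) * t * (2 * q + t) / (23 * q ^ 2) < 7 / 3 - ξ := by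
      rw [div_lt_iff₀ hq2]; linarith
    linarith
end
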